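/- arXiv:2112.10906 — 3 statements merged into one kernel-verified Lean document; each statement's English description precedes it below -/
import Mathlib

section
/- Assume d₁ ∘ d₀ = 0 and that d₀ maps the orthogonal complement of V₀ into the orthogonal complement of V₁. Then L† ∘ dᵗ = 0 as a linear map V₀ → 𝔹 (in the paper's notation, ð_q^{t,p} ∘ d_{q−1}^t = 0); in particular the range of dᵗ is contained in the kernel of L†. -/
noncomputable section

open LinearMap RealInnerProductSpace

variable {W₀ W₁ W₂ : Type*}
  [NormedAddCommGroup W₀] [InnerProductSpace ℝ W₀] [FiniteDimensional ℝ W₀]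
  [NormedAddCommGroup W₁] [InnerProductSpace ℝ W₁] [FiniteDimensional ℝ W₁]
  [NormedAddCommGroup W₂] [InnerProductSpace ℝ W₂] [FiniteDimensional ℝ W₂]

/-- The compressed map `dᵗ : V₀ → V₁`, namely `π ∘ d₀` restricted to `V₀`, where
`π` is the orthogonal projection of `W₁` onto `V₁`. -/
def compressedMap (d₀ : W₀ →ₗ[ℝ] W₁) (V₀ : Submodule ℝ W₀) (V₁ : Submodule ℝ W₁) :
    V₀ →ₗ[ℝ] V₁ :=
  (V₁.orthogonalProjection).toLinearMap ∘ₗ d₀ ∘ₗ V₀.subtype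

/-- The subspace `𝔹 = {e ∈ W₂ : d₁†(e) ∈ V₁}` of `W₂`. -/
def sheafB (d₁ : W₁ →ₗ[ℝ] W₂) (V₁ : Submodule ℝ W₁) : Submodule ℝ W₂ :=
  V₁.comap (LinearMap.adjoint d₁)

/-- The map `L : 𝔹 → V₁` obtained by restricting `d₁†` to `𝔹`. -/
def sheafL (d₁ : W₁ →ₗ[ℝ] W₂) (V₁ : Submodule ℝ W₁) : sheafB d₁ V₁ →ₗ[ℝ] V₁ :=
  (LinearMap.adjoint d₁).restrict (fun _ hx => hx)

/-- The persistent sheaf Laplacian `Δ = L ∘ L† + dt ∘ dt† : V₁ → V₁`, built from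
`d₁` (via `L`, the restriction of `d₁†` to `𝔹`) and a compressed map `dt`. -/
def PSL {V₀ : Submodule ℝ W₀} (d₁ : W₁ →ₗ[ℝ] W₂) (V₁ : Submodule ℝ W₁)
    (dt : V₀ →ₗ[ℝ] V₁) : V₁ →ₗ[ℝ] V₁ :=
  sheafL d₁ V₁ ∘ₗ LinearMap.adjoint (sheafL d₁ V₁) + dt ∘ₗ LinearMap.adjoint dt

theorem inner_compressedMap_sheafL (d₀ : W₀ →ₗ[ℝ] W₁) (d₁ : W₁ →ₗ[ℝ] W₂)
    (V₀ : Submodule ℝ W₀) (V₁ : Submodule ℝ W₁) (x : V₀) (y : sheafB d₁ V₁) :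
    ⟪compressedMap d₀ V₀ V₁ x, sheafL d₁ V₁ y⟫ = ⟪d₁ (d₀ x), y⟫ := by
  -- `L y = d₁† y` lies in `V₁`, so the projection onto `V₁` can be dropped.
  have hLy : (sheafL d₁ V₁ y : W₁) = LinearMap.adjoint d₁ y := rfl
  rw [compressedMap, comp_apply, comp_apply, ContinuousLinearMap.coe_coe,
    Submodule.inner_orthogonalProjectionOnto_eq_of_mem_right, hLy, adjoint_inner_right]
  rfl

theorem range_compressedMap_le_orthogonal_range_sheafL (d₀ : W₀ →ₗ[ℝ] W₁)
    (d₁ : W₁ →ₗ[ℝ] W₂) (V₀ : Submodule ℝ W₀) (V₁ : Submodule ℝ W₁) (hd : d₁ ∘ₗ d₀ = 0) :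
    range (compressedMap d₀ V₀ V₁) ≤ (range (sheafL d₁ V₁))ᗮ := by
  rintro _ ⟨x, rfl⟩
  rw [Submodule.mem_orthogonal']
  rintro _ ⟨y, rfl⟩
  rw [inner_compressedMap_sheafL, ← comp_apply, hd, LinearMap.zero_apply, inner_zero_left]

theorem adjoint_L_comp_compressed_eq_zero_general (d₀ : W₀ →ₗ[ℝ] W₁) (d₁ : W₁ →ₗ[ℝ] W₂)
    (V₀ : Submodule ℝ W₀) (V₁ : Submodule ℝ W₁)
    (hd : d₁ ∘ₗ d₀ = 0) :
    LinearMap.adjoint (sheafL d₁ V₁) ∘ₗ compressedMap d₀ V₀ V₁ = 0 ∧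
      LinearMap.range (compressedMap d₀ V₀ V₁) ≤
        LinearMap.ker (LinearMap.adjoint (sheafL d₁ V₁)) := by
  have hrange := range_compressedMap_le_orthogonal_range_sheafL d₀ d₁ V₀ V₁ hd
  rw [orthogonal_range] at hrange
  exact ⟨range_le_ker_iff.mp hrange, hrange⟩

/-- `L† ∘ dᵗ = 0` as a linear map `V₀ → 𝔹`; in particular
`range dᵗ ⊆ ker L†`. -/
theorem adjoint_L_comp_compressed_eq_zero (d₀ : W₀ →ₗ[ℝ] W₁) (d₁ : W₁ →ₗ[ℝ] W₂)
    (V₀ : Submodule ℝ W₀) (V₁ : Submodule ℝ W₁)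
    (hd : d₁ ∘ₗ d₀ = 0)
    (hcompl : ∀ x ∈ V₀ᗮ, d₀ x ∈ V₁ᗮ) :
    LinearMap.adjoint (sheafL d₁ V₁) ∘ₗ compressedMap d₀ V₀ V₁ = 0 ∧
      LinearMap.range (compressedMap d₀ V₀ V₁) ≤
        LinearMap.ker (LinearMap.adjoint (sheafL d₁ V₁)) :=
  adjoint_L_comp_compressed_eq_zero_general d₀ d₁ V₀ V₁ hd
end
end

section
/- Let J : W₁ → W₁ be a self-adjoint linear involution (J† = J and J ∘ J = id) with J(V₁) ⊆ V₁, and let J₁ : V₁ → V₁ be its restriction to V₁. Set d̄₁ := d₁ ∘ J, 𝔹̄ := {e ∈ W₂ : d̄₁†(e) ∈ V₁}, and let Δ̄ be the persistent sheaf Laplacian built from d̄₁ and d̄ᵗ := J₁ ∘ dᵗ. Then 𝔹̄ = 𝔹, Δ̄ = J₁ ∘ Δ ∘ J₁, and consequently a real number μ is an eigenvalue of Δ̄ if and only if it is an eigenvalue of Δ. (Case II of the paper's proposition that the spectra of persistent sheaf Laplacians do not depend on the orientation: alternating the orientation of a q-cell of X_{t+p}.) -/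
noncomputable section

open LinearMap RealInnerProductSpace

variable {W₀ W₁ W₂ : Type*}
  [NormedAddCommGroup W₀] [InnerProductSpace ℝ W₀] [FiniteDimensional ℝ W₀]
  [NormedAddCommGroup W₁] [InnerProductSpace ℝ W₁] [FiniteDimensional ℝ W₁]
  [NormedAddCommGroup W₂] [InnerProductSpace ℝ W₂] [FiniteDimensional ℝ W₂]

/-! Since `J` is an involution preserving `V₁`, it maps `V₁` onto itself, so `𝔹̄ = 𝔹`, and its
restriction `J₁` is a self-adjoint involution of `V₁`. As `L L† = d₁† ∘ P_𝔹 ∘ d₁` on `V₁`, both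
summands of the Laplacian are conjugated by `J₁`, and conjugation by the unit `J₁ = J₁⁻¹` of
`End V₁` preserves the spectrum. -/

theorem Module.End.hasEigenvalue_mul_mul_iff_of_mul_self_eq_one {K V : Type*} [Field K]
    [AddCommGroup V] [Module K V] [FiniteDimensional K V] {e : Module.End K V}
    (he : e * e = 1) (f : Module.End K V) (μ : K) :
    HasEigenvalue (e * f * e) μ ↔ HasEigenvalue f μ := by
  let u : (Module.End K V)ˣ := ⟨e, e, he, he⟩
  rw [hasEigenvalue_iff_mem_spectrum, hasEigenvalue_iff_mem_spectrum]
  exact Set.ext_iff.mp (spectrum.units_conjugate (u := u)) μ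

theorem Submodule.comap_eq_self_of_involutive {R M : Type*} [Semiring R] [AddCommMonoid M]
    [Module R M] {J : M →ₗ[R] M} (hJ : Function.Involutive J) {V : Submodule R M}
    (hJV : ∀ x ∈ V, J x ∈ V) : V.comap J = V :=
  le_antisymm (fun x hx => hJ x ▸ hJV _ hx) fun x hx => hJV x hx

theorem sheafB_comp_of_comap_adjoint_eq (d₁ : W₁ →ₗ[ℝ] W₂) {V₁ : Submodule ℝ W₁}
    {J : W₁ →ₗ[ℝ] W₁} (hJV : V₁.comap (adjoint J) = V₁) :
    sheafB (d₁ ∘ₗ J) V₁ = sheafB d₁ V₁ := by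
  rw [sheafB, adjoint_comp, Submodule.comap_comp, hJV, sheafB]

theorem adjoint_sheafL (d₁ : W₁ →ₗ[ℝ] W₂) (V₁ : Submodule ℝ W₁) :
    adjoint (sheafL d₁ V₁) =
      (sheafB d₁ V₁).orthogonalProjectionOnto.toLinearMap ∘ₗ d₁ ∘ₗ V₁.subtype := by
  refine ((eq_adjoint_iff _ _).mpr fun x e => ?_).symm
  have hLe : (sheafL d₁ V₁ e : W₁) = adjoint d₁ e := rfl
  rw [Submodule.coe_inner V₁ x, hLe, adjoint_inner_right]
  exact Submodule.inner_orthogonalProjectionOnto_eq_of_mem_right e (d₁ x)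

theorem coe_sheafL_adjoint_sheafL_apply (d₁ : W₁ →ₗ[ℝ] W₂) (V₁ : Submodule ℝ W₁) (x : V₁) :
    (sheafL d₁ V₁ (adjoint (sheafL d₁ V₁) x) : W₁) =
      adjoint d₁ ((sheafB d₁ V₁).starProjection (d₁ x)) := by
  rw [adjoint_sheafL]
  rfl

section Involution

variable {J : W₁ →ₗ[ℝ] W₁} (hJa : adjoint J = J) {V₁ : Submodule ℝ W₁}
  (hJV : ∀ x ∈ V₁, J x ∈ V₁)
include hJa

theorem adjoint_restrict_of_adjoint_eq_self : adjoint (J.restrict hJV) = J.restrict hJV := by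
  have hJ : J.IsSymmetric := (isSymmetric_iff_isSelfAdjoint J).mpr (isSelfAdjoint_iff'.mpr hJa)
  exact isSelfAdjoint_iff'.mp ((isSymmetric_iff_isSelfAdjoint _).mp (hJ.restrict_invariant hJV))

theorem sheafL_comp_adjoint_sheafL_comp_eq_restrict_conj (d₁ : W₁ →ₗ[ℝ] W₂)
    (hB : sheafB (d₁ ∘ₗ J) V₁ = sheafB d₁ V₁) :
    sheafL (d₁ ∘ₗ J) V₁ ∘ₗ adjoint (sheafL (d₁ ∘ₗ J) V₁) =
      J.restrict hJV ∘ₗ (sheafL d₁ V₁ ∘ₗ adjoint (sheafL d₁ V₁)) ∘ₗ J.restrict hJV := by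
  ext x
  simp only [comp_apply, coe_restrict_apply]
  rw [coe_sheafL_adjoint_sheafL_apply, coe_sheafL_adjoint_sheafL_apply, hB, adjoint_comp, hJa]
  rfl

theorem PSL_comp_eq_restrict_conj {V₀ : Submodule ℝ W₀} (d₁ : W₁ →ₗ[ℝ] W₂)
    (hB : sheafB (d₁ ∘ₗ J) V₁ = sheafB d₁ V₁) (dt : V₀ →ₗ[ℝ] V₁) :
    PSL (d₁ ∘ₗ J) V₁ (J.restrict hJV ∘ₗ dt) =
      J.restrict hJV ∘ₗ PSL d₁ V₁ dt ∘ₗ J.restrict hJV := by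
  rw [PSL, PSL, sheafL_comp_adjoint_sheafL_comp_eq_restrict_conj hJa hJV d₁ hB, adjoint_comp,
    adjoint_restrict_of_adjoint_eq_self hJa hJV, add_comp, comp_add]
  simp only [comp_assoc]

end Involution

/-- Case II of orientation independence: if `J : W₁ → W₁` is a
self-adjoint involution with `J(V₁) ⊆ V₁` and restriction `J₁ : V₁ → V₁`, then
`𝔹̄ = 𝔹`, the Laplacian `Δ̄` built from `d̄₁ = d₁ ∘ J` and `d̄ᵗ = J₁ ∘ dᵗ` equals
`J₁ ∘ Δ ∘ J₁`, and `Δ̄` and `Δ` have the same eigenvalues. -/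
theorem PSL_conj_involution (d₀ : W₀ →ₗ[ℝ] W₁) (d₁ : W₁ →ₗ[ℝ] W₂)
    (V₀ : Submodule ℝ W₀) (V₁ : Submodule ℝ W₁)
    (J : W₁ →ₗ[ℝ] W₁)
    (hJa : LinearMap.adjoint J = J)
    (hJi : J ∘ₗ J = LinearMap.id)
    (hJV : ∀ x ∈ V₁, J x ∈ V₁)
    (J₁ : V₁ →ₗ[ℝ] V₁)
    (hJ₁ : ∀ x : V₁, (J₁ x : W₁) = J x) :
    sheafB (d₁ ∘ₗ J) V₁ = sheafB d₁ V₁ ∧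
      PSL (d₁ ∘ₗ J) V₁ (J₁ ∘ₗ compressedMap d₀ V₀ V₁) =
        J₁ ∘ₗ PSL d₁ V₁ (compressedMap d₀ V₀ V₁) ∘ₗ J₁ ∧
      ∀ μ : ℝ,
        Module.End.HasEigenvalue
            (PSL (d₁ ∘ₗ J) V₁ (J₁ ∘ₗ compressedMap d₀ V₀ V₁) : Module.End ℝ V₁) μ ↔
          Module.End.HasEigenvalue
            (PSL d₁ V₁ (compressedMap d₀ V₀ V₁) : Module.End ℝ V₁) μ := by
  have hJ : Function.Involutive J := LinearMap.congr_fun hJi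
  obtain rfl : J₁ = J.restrict hJV := LinearMap.ext fun x => Subtype.ext (hJ₁ x)
  have hB : sheafB (d₁ ∘ₗ J) V₁ = sheafB d₁ V₁ := by
    refine sheafB_comp_of_comap_adjoint_eq d₁ ?_
    rw [hJa]
    exact Submodule.comap_eq_self_of_involutive hJ hJV
  have hΔ := PSL_comp_eq_restrict_conj hJa hJV d₁ hB (compressedMap d₀ V₀ V₁)
  have hJ₁J₁ : J.restrict hJV * J.restrict hJV = 1 :=
    LinearMap.ext fun x => Subtype.ext (hJ x)
  refine ⟨hB, hΔ, fun μ => ?_⟩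
  rw [hΔ, ← Module.End.mul_eq_comp, ← Module.End.mul_eq_comp, ← mul_assoc]
  exact Module.End.hasEigenvalue_mul_mul_iff_of_mul_self_eq_one hJ₁J₁ _ μ
end
end

section
/- Let c be a nonzero real number, set d̄₁ := c·d₁ and d̄ᵗ := c·dᵗ, and let Δ̄ be the persistent sheaf Laplacian built from d̄₁ and d̄ᵗ (with 𝔹̄ := {e ∈ W₂ : d̄₁†(e) ∈ V₁}). Then 𝔹̄ = 𝔹, Δ̄ = c²·Δ, and a real number μ is an eigenvalue of Δ if and only if c²·μ is an eigenvalue of Δ̄. (This is the paper's proposition that if all labels q_i of a labeled point cloud are multiplied by a coefficient c, so that every coboundary map scales by c, then the spectrum of every persistent sheaf Laplacian is multiplied by c².) -/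
noncomputable section

open LinearMap RealInnerProductSpace

variable {W₀ W₁ W₂ : Type*}
  [NormedAddCommGroup W₀] [InnerProductSpace ℝ W₀] [FiniteDimensional ℝ W₀]
  [NormedAddCommGroup W₁] [InnerProductSpace ℝ W₁] [FiniteDimensional ℝ W₁]
  [NormedAddCommGroup W₂] [InnerProductSpace ℝ W₂] [FiniteDimensional ℝ W₂]

/-!
Multiplying `d₁` by `c ≠ 0` multiplies `d₁†` by `c`, so the condition `d₁†(e) ∈ V₁`
defining `𝔹` is unchanged and `L̄ = c • L` once `𝔹̄` is identified with `𝔹` by the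
identity isometry. Each summand `f ∘ f†` of the Laplacian therefore picks up a factor
`c²`, and the eigenvalues of `c² • Δ` are those of `Δ` multiplied by `c²`.
-/

theorem Module.End.hasEigenvalue_smul_iff {K V : Type*} [Field K] [AddCommGroup V] [Module K V]
    (f : Module.End K V) {a : K} (ha : a ≠ 0) (μ : K) :
    (a • f).HasEigenvalue (a * μ) ↔ f.HasEigenvalue μ := by
  have : (a • f).eigenspace (a * μ) = f.eigenspace μ := by
    rw [eigenspace_def, eigenspace_def, ← smul_smul, ← smul_sub, LinearMap.ker_smul _ _ ha]
  simp only [hasEigenvalue_iff, this]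

section

variable {E F G : Type*}
  [NormedAddCommGroup E] [InnerProductSpace ℝ E] [FiniteDimensional ℝ E]
  [NormedAddCommGroup F] [InnerProductSpace ℝ F] [FiniteDimensional ℝ F]
  [NormedAddCommGroup G] [InnerProductSpace ℝ G] [FiniteDimensional ℝ G]

theorem LinearMap.adjoint_smul_real (c : ℝ) (f : E →ₗ[ℝ] F) :
    adjoint (c • f) = c • adjoint f := by
  simp

theorem LinearMap.smul_comp_adjoint_smul (c : ℝ) (f : E →ₗ[ℝ] F) :
    (c • f) ∘ₗ adjoint (c • f) = c ^ 2 • (f ∘ₗ adjoint f) := by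
  rw [adjoint_smul_real, smul_comp, comp_smul, smul_smul, sq]

theorem LinearMap.comp_linearIsometryEquiv_comp_adjoint (f : F →ₗ[ℝ] G) (e : E ≃ₗᵢ[ℝ] F) :
    (f ∘ₗ e.toLinearMap) ∘ₗ adjoint (f ∘ₗ e.toLinearMap) = f ∘ₗ adjoint f := by
  rw [adjoint_comp, e.adjoint_toLinearMap_eq_symm]
  ext x
  simp

end

theorem sheafB_smul (d₁ : W₁ →ₗ[ℝ] W₂) (V₁ : Submodule ℝ W₁) {c : ℝ} (hc : c ≠ 0) :
    sheafB (c • d₁) V₁ = sheafB d₁ V₁ := by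
  ext x
  simp only [sheafB, Submodule.mem_comap, adjoint_smul_real, LinearMap.smul_apply]
  exact V₁.smul_mem_iff hc

theorem sheafL_smul (d₁ : W₁ →ₗ[ℝ] W₂) (V₁ : Submodule ℝ W₁) {c : ℝ} (hc : c ≠ 0) :
    sheafL (c • d₁) V₁ =
      c • (sheafL d₁ V₁ ∘ₗ
        (LinearIsometryEquiv.ofEq _ _ (sheafB_smul d₁ V₁ hc)).toLinearMap) := by
  ext x
  show adjoint (c • d₁) (x : W₂) = c • adjoint d₁ (x : W₂)
  rw [adjoint_smul_real, LinearMap.smul_apply]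

theorem PSL_smul_smul {V₀ : Submodule ℝ W₀} (d₁ : W₁ →ₗ[ℝ] W₂) (V₁ : Submodule ℝ W₁)
    (dt : V₀ →ₗ[ℝ] V₁) {c : ℝ} (hc : c ≠ 0) :
    PSL (c • d₁) V₁ (c • dt) = c ^ 2 • PSL d₁ V₁ dt := by
  rw [PSL, PSL, sheafL_smul d₁ V₁ hc, smul_comp_adjoint_smul, smul_comp_adjoint_smul,
    comp_linearIsometryEquiv_comp_adjoint, smul_add]

/-- scaling all labels by a nonzero `c` scales the coboundaries by `c`
and hence the persistent sheaf Laplacian, and its spectrum, by `c²`. -/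
theorem PSL_smul (d₀ : W₀ →ₗ[ℝ] W₁) (d₁ : W₁ →ₗ[ℝ] W₂)
    (V₀ : Submodule ℝ W₀) (V₁ : Submodule ℝ W₁)
    (c : ℝ) (hc : c ≠ 0) :
    sheafB (c • d₁) V₁ = sheafB d₁ V₁ ∧
      PSL (c • d₁) V₁ (c • compressedMap d₀ V₀ V₁) =
        c ^ 2 • PSL d₁ V₁ (compressedMap d₀ V₀ V₁) ∧
      ∀ μ : ℝ,
        Module.End.HasEigenvalue
            (PSL d₁ V₁ (compressedMap d₀ V₀ V₁) : Module.End ℝ V₁) μ ↔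
          Module.End.HasEigenvalue
            (PSL (c • d₁) V₁ (c • compressedMap d₀ V₀ V₁) : Module.End ℝ V₁)
            (c ^ 2 * μ) := by
  refine ⟨sheafB_smul d₁ V₁ hc, PSL_smul_smul d₁ V₁ _ hc, fun μ => ?_⟩
  rw [PSL_smul_smul d₁ V₁ _ hc, Module.End.hasEigenvalue_smul_iff _ (pow_ne_zero 2 hc)]
end
end
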